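/- Let α be irrational with denominators (q_n) and β real. If there exists n₀ such that ‖q_n β‖ ≤ (1/4) q_n ‖q_n α‖ for all n ≥ n₀, then β ∈ ℤα + ℤ. -/

import Mathlib

/-- Denominators of the continued fraction convergents of a real number. -/
noncomputable def contDen (α : ℝ) (n : ℕ) : ℝ := (GenContFract.of α).dens n

/-- Distance from a real number to the nearest integer. -/
noncomputable def nint (x : ℝ) : ℝ := |x - (round x : ℝ)|

/-- `α` is of bounded type: the partial quotients in its continued fraction expansion
are bounded. -/
def BoundedType (α : ℝ) : Prop :=
  ∃ M : ℝ, ∀ n : ℕ, ∀ b : ℝ, (GenContFract.of α).partDens.get? n = some b → b ≤ M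

/-- Membership in the subgroup ℤα + ℤ of ℝ. -/
def InZalphaZ (α β : ℝ) : Prop := ∃ m k : ℤ, β = (m : ℝ) * α + (k : ℝ)

/-!
Solve `m p_j + k q_j = r_j` (`j = n, n + 1`) in integers, where `p_j / q_j` are the
convergents and `r_j` is the integer nearest to `q_j β`; this is possible because the
determinant `p_n q_{n+1} - q_n p_{n+1}` is `±1`. Eliminating, `m` and `γ_n = β - m α - k` are
expressed through the small quantities `q_j α - p_j` and `q_j β - r_j`, and the hypothesis gives
`|m| < q_n / 2` and `|γ_n| ≤ |q_n α - p_n| / 2`. Consecutive solutions `(m, k)` both solve the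
equation at `n + 1`, so their `m` differ by a multiple of `q_{n+1}` of absolute value `< q_{n+1}`;
hence `(m, k)` is eventually constant, and `γ = 0` because `|q_n α - p_n| → 0`.
-/

open Filter

theorem nint_le_abs_sub (x : ℝ) (z : ℤ) : nint x ≤ |x - z| :=
  round_le x z

namespace GenContFract

variable {α : ℝ}

theorem not_terminatedAt_of_irrational (hα : Irrational α) (n : ℕ) :
    ¬(GenContFract.of α).TerminatedAt n := fun h => by
  obtain ⟨q, hq⟩ := (terminates_iff_rat α).1 ⟨n, h⟩
  exact hα ⟨q, hq.symm⟩

theorem exists_int_contsAux_of_irrational (hα : Irrational α) (n : ℕ) :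
    ∃ a b : ℤ, (GenContFract.of α).contsAux n = ⟨a, b⟩ := by
  induction n using Nat.twoStepInduction with
  | zero => exact ⟨1, 0, by simp⟩
  | one => exact ⟨⌊α⌋, 1, by simp [of_h_eq_floor]⟩
  | more n ih ih' =>
    obtain ⟨a, b, hab⟩ := ih
    obtain ⟨a', b', hab'⟩ := ih'
    obtain ⟨gp, hgp⟩ := Option.ne_none_iff_exists'.1 (not_terminatedAt_of_irrational hα n)
    obtain ⟨c, hc⟩ := exists_int_eq_of_partDen (partDen_eq_s_b hgp)
    refine ⟨c * a' + a, c * b' + b, ?_⟩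
    rw [contsAux_recurrence hgp hab hab', of_partNum_eq_one (partNum_eq_s_a hgp), hc]
    push_cast
    ring_nf

theorem exists_int_nums_dens_of_irrational (hα : Irrational α) :
    ∃ p q : ℕ → ℤ, ∀ n,
      (GenContFract.of α).nums n = p n ∧ (GenContFract.of α).dens n = q n := by
  choose a b h using exists_int_contsAux_of_irrational hα
  exact ⟨fun n => a (n + 1), fun n => b (n + 1), fun n => by
    simp [num_eq_conts_a, den_eq_conts_b, nth_cont_eq_succ_nth_contAux, h]⟩

theorem fib_succ_le_dens_of_irrational (hα : Irrational α) (n : ℕ) :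
    (Nat.fib (n + 1) : ℝ) ≤ (GenContFract.of α).dens n :=
  succ_nth_fib_le_of_nth_den (Or.inr (not_terminatedAt_of_irrational hα _))

theorem dens_pos_of_irrational (hα : Irrational α) (n : ℕ) : 0 < (GenContFract.of α).dens n :=
  (fib_succ_le_dens_of_irrational hα n).trans_lt' (mod_cast Nat.fib_pos.2 n.succ_pos)

theorem tendsto_dens_of_irrational (hα : Irrational α) :
    Tendsto (GenContFract.of α).dens atTop atTop := by
  have hfib : Tendsto (fun n => Nat.fib (n + 1)) atTop atTop :=
    (tendsto_add_atTop_iff_nat 1).1 Nat.fib_add_two_strictMono.tendsto_atTop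
  exact tendsto_atTop_mono (fib_succ_le_dens_of_irrational hα)
    (tendsto_natCast_atTop_atTop.comp hfib)

theorem abs_nums_mul_dens_succ_sub_dens_mul_nums_succ (hα : Irrational α) (n : ℕ) :
    |(GenContFract.of α).nums n * (GenContFract.of α).dens (n + 1) -
      (GenContFract.of α).dens n * (GenContFract.of α).nums (n + 1)| = 1 := by
  have h : (GenContFract.of α).nums n * (GenContFract.of α).dens (n + 1) -
      (GenContFract.of α).dens n * (GenContFract.of α).nums (n + 1) = (-1) ^ (n + 1) :=
    (SimpContFract.of α).determinant (not_terminatedAt_of_irrational hα n)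
  rw [h, abs_neg_one_pow]

theorem abs_dens_mul_sub_nums_mul_dens_succ_lt_one (hα : Irrational α) (n : ℕ) :
    |(GenContFract.of α).dens n * α - (GenContFract.of α).nums n| *
      (GenContFract.of α).dens (n + 1) < 1 := by
  have hq := dens_pos_of_irrational hα n
  have hq' := dens_pos_of_irrational hα (n + 1)
  have hle : |(GenContFract.of α).dens n * α - (GenContFract.of α).nums n| *
      (GenContFract.of α).dens (n + 1) ≤ 1 := by
    have h := abs_sub_convs_le (not_terminatedAt_of_irrational hα n)
    rw [conv_eq_num_div_den, le_div_iff₀ (by positivity)] at h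
    calc _ = |α - (GenContFract.of α).nums n / (GenContFract.of α).dens n| *
          ((GenContFract.of α).dens n * (GenContFract.of α).dens (n + 1)) := by
          rw [← mul_assoc, ← abs_of_pos hq, ← abs_mul, abs_of_pos hq, sub_mul,
            div_mul_cancel₀ _ hq.ne', mul_comm α]
      _ ≤ 1 := h
  obtain ⟨p, q, hpq⟩ := exists_int_nums_dens_of_irrational hα
  simp only [(hpq _).1, (hpq _).2] at hle hq hq' ⊢
  have hirr : Irrational ((q n * α - p n) * q (n + 1)) :=
    ((hα.intCast_mul (by exact_mod_cast hq.ne')).sub_intCast (p n)).mul_intCast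
      (by exact_mod_cast hq'.ne')
  refine hle.lt_of_ne fun h1 => ?_
  rw [← abs_of_pos hq', ← abs_mul] at h1
  rcases (abs_eq zero_le_one).1 h1 with h | h
  · exact hirr.ne_one h
  · exact hirr.ne_int (-1) (by simpa using h)

end GenContFract

theorem mul_self_eq_one_of_abs_eq_one {R : Type*} [Ring R] [LinearOrder R] [IsOrderedRing R]
    {d : R} (h : |d| = 1) : d * d = 1 := by
  rw [← abs_mul_abs_self, h, one_mul]

section LinearSystem

variable {p q p' q' m k m' k' : ℤ}

theorem exists_solution_of_abs_det_eq_one (hdet : |p * q' - q * p'| = 1) (r r' : ℤ) :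
    ∃ m k : ℤ, m * p + k * q = r ∧ m * p' + k * q' = r' := by
  have hd := mul_self_eq_one_of_abs_eq_one hdet
  exact ⟨(p * q' - q * p') * (r * q' - q * r'), (p * q' - q * p') * (p * r' - r * p'),
    by linear_combination r * hd, by linear_combination r' * hd⟩

theorem isCoprime_of_abs_det_eq_one (hdet : |p * q' - q * p'| = 1) : IsCoprime p' q' :=
  ⟨-((p * q' - q * p') * q), (p * q' - q * p') * p, by
    linear_combination mul_self_eq_one_of_abs_eq_one hdet⟩

theorem eq_of_mul_add_mul_eq (hcop : IsCoprime p q) (h : m * p + k * q = m' * p + k' * q)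
    (hm : |m - m'| < q) : m = m' ∧ k = k' := by
  have hdvd : q ∣ m - m' := hcop.symm.dvd_of_dvd_mul_right ⟨k' - k, by linear_combination h⟩
  have hm' : m = m' := sub_eq_zero.1 (Int.eq_zero_of_abs_lt_dvd hdvd hm)
  subst hm'
  have hq : q ≠ 0 := ((abs_nonneg _).trans_lt hm).ne'
  exact ⟨rfl, mul_right_cancel₀ hq (by linarith)⟩

-- Eliminate `m`, resp. `β - m α - k`, between `q (β - m α - k) = (q β - r) - m (q α - p)` and
-- the same identity for the second row.
theorem abs_eq_of_solution {r r' : ℤ} (α β : ℝ) (hdet : |p * q' - q * p'| = 1)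
    (h : m * p + k * q = r) (h' : m * p' + k * q' = r') :
    |(m : ℝ)| = |q * (q' * β - r') - q' * (q * β - r)| ∧
      |β - m * α - k| = |(q' * α - p') * (q * β - r) - (q * α - p) * (q' * β - r')| := by
  have hd : |((p * q' - q * p' : ℤ) : ℝ)| = 1 := by exact_mod_cast hdet
  have hR : (m : ℝ) * p + k * q = r := by exact_mod_cast h
  have hR' : (m : ℝ) * p' + k * q' = r' := by exact_mod_cast h'
  push_cast at hd
  constructor
  · rw [← mul_one |(m : ℝ)|, ← hd, ← abs_mul]
    congr 1
    linear_combination q' * hR - q * hR'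
  · rw [← mul_one |β - m * α - k|, ← hd, ← abs_mul]
    congr 1
    linear_combination (q * α - p) * hR' - (q' * α - p') * hR

end LinearSystem

section CrossBounds

variable {q q' e e' δ δ' : ℝ}

theorem abs_mul_sub_mul_lt_half (hq : 0 < q) (hqq' : q ≤ q') (hδ : |δ| ≤ 1 / 4 * q * |e|)
    (hδ' : |δ'| ≤ 1 / 4 * q' * |e'|) (he : |e| * q' < 1) (he' : q' * |e'| ≤ 1) :
    |q * δ' - q' * δ| < q / 2 := by
  calc |q * δ' - q' * δ| ≤ q * |δ'| + q' * |δ| := by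
        simpa only [abs_mul, abs_of_pos hq, abs_of_pos (hq.trans_le hqq')] using
          abs_sub (q * δ') (q' * δ)
    _ ≤ q * (1 / 4 * q' * |e'|) + q' * (1 / 4 * q * |e|) := by
        gcongr
        exact hq.le.trans hqq'
    _ = q / 4 * (q' * |e'| + |e| * q') := by ring
    _ < q / 4 * 2 := by gcongr; linarith
    _ = q / 2 := by ring

theorem abs_mul_sub_mul_le_half (hqq' : q ≤ q') (hδ : |δ| ≤ 1 / 4 * q * |e|)
    (hδ' : |δ'| ≤ 1 / 4 * q' * |e'|) (he' : q' * |e'| ≤ 1) :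
    |e' * δ - e * δ'| ≤ |e| / 2 := by
  have hqe' : q * |e'| ≤ 1 := (mul_le_mul_of_nonneg_right hqq' (abs_nonneg _)).trans he'
  calc |e' * δ - e * δ'| ≤ |e'| * |δ| + |e| * |δ'| := by
        simpa only [abs_mul] using abs_sub (e' * δ) (e * δ')
    _ ≤ |e'| * (1 / 4 * q * |e|) + |e| * (1 / 4 * q' * |e'|) := by gcongr
    _ = |e| / 4 * (q * |e'| + q' * |e'|) := by ring
    _ ≤ |e| / 4 * 2 := by gcongr; linarith
    _ = |e| / 2 := by ring

end CrossBounds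

theorem eq_zero_of_eventually_mul_abs_lt_one {ι : Type*} {l : Filter ι} [l.NeBot]
    {u : ι → ℝ} {x : ℝ} (hu : Tendsto u l atTop) (h : ∀ᶠ i in l, u i * |x| < 1) :
    x = 0 := by
  by_contra hx
  obtain ⟨i, hi, hi'⟩ := ((hu.eventually_gt_atTop (1 / |x|)).and h).exists
  rw [div_lt_iff₀ (abs_pos.2 hx)] at hi
  linarith

theorem inZalphaZ_of_eventually_nint_le {α β : ℝ} {p q : ℕ → ℤ}
    (hq : ∀ n, 0 < (q n : ℝ)) (hmono : Monotone fun n => (q n : ℝ))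
    (htop : Tendsto (fun n => (q n : ℝ)) atTop atTop)
    (hdet : ∀ n, |p n * q (n + 1) - q n * p (n + 1)| = 1)
    (happrox : ∀ n, |q n * α - p n| * q (n + 1) < 1)
    (hβ : ∀ᶠ n in atTop, nint (q n * β) ≤ 1 / 4 * q n * |q n * α - p n|) :
    InZalphaZ α β := by
  choose m k hm hk using fun n =>
    exists_solution_of_abs_det_eq_one (hdet n) (round (q n * β)) (round (q (n + 1) * β))
  obtain ⟨N, hN⟩ := eventually_atTop.1 hβ
  have happrox' n : q (n + 1) * |q (n + 1) * α - p (n + 1)| ≤ 1 := by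
    rw [mul_comm]
    exact (mul_le_mul_of_nonneg_left (hmono (n + 1).le_succ) (abs_nonneg _)).trans
      (happrox (n + 1)).le
  have hbounds : ∀ n ≥ N,
      |(m n : ℝ)| < q n / 2 ∧ |β - m n * α - k n| ≤ |q n * α - p n| / 2 := by
    intro n hn
    obtain ⟨hm_eq, hγ_eq⟩ := abs_eq_of_solution α β (hdet n) (hm n) (hk n)
    rw [hm_eq, hγ_eq]
    exact ⟨abs_mul_sub_mul_lt_half (hq n) (hmono n.le_succ) (hN n hn) (hN (n + 1) (by omega))
        (happrox n) (happrox' n),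
      abs_mul_sub_mul_le_half (hmono n.le_succ) (hN n hn) (hN (n + 1) (by omega)) (happrox' n)⟩
  have hstep : ∀ n ≥ N, m (n + 1) = m n ∧ k (n + 1) = k n := by
    intro n hn
    refine eq_of_mul_add_mul_eq (isCoprime_of_abs_det_eq_one (hdet n))
      ((hm (n + 1)).trans (hk n).symm) ?_
    have h : |(m (n + 1) : ℝ) - m n| < q (n + 1) := by
      calc |(m (n + 1) : ℝ) - m n| ≤ |(m (n + 1) : ℝ)| + |(m n : ℝ)| := abs_sub _ _
        _ < q (n + 1) / 2 + q n / 2 :=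
          add_lt_add (hbounds (n + 1) (by omega)).1 (hbounds n hn).1
        _ ≤ q (n + 1) := by linarith [hmono n.le_succ]
    exact_mod_cast h
  have hconst : ∀ n ≥ N, m n = m N ∧ k n = k N := by
    intro n hn
    induction n, hn using Nat.le_induction with
    | base => exact ⟨rfl, rfl⟩
    | succ n hn ih => exact ⟨(hstep n hn).1.trans ih.1, (hstep n hn).2.trans ih.2⟩
  have hγ : β - m N * α - k N = 0 := by
    refine eq_zero_of_eventually_mul_abs_lt_one htop ?_
    filter_upwards [eventually_ge_atTop N] with n hn
    have hγn := (hbounds n hn).2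
    rw [(hconst n hn).1, (hconst n hn).2] at hγn
    calc (q n : ℝ) * |β - m N * α - k N| ≤ q (n + 1) * (|q n * α - p n| / 2) :=
          mul_le_mul (hmono n.le_succ) hγn (abs_nonneg _) (hq _).le
      _ < 1 := by linarith [happrox n]
  exact ⟨m N, k N, by linarith⟩

theorem stmt11_general (α : ℝ) (hα : Irrational α) (β : ℝ)
    (h : ∃ n₀ : ℕ, ∀ n ≥ n₀,
      nint (contDen α n * β) ≤ (1/4) * contDen α n * nint (contDen α n * α)) :
    InZalphaZ α β := by
  obtain ⟨p, q, hpq⟩ := GenContFract.exists_int_nums_dens_of_irrational hα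
  have hp n : (p n : ℝ) = (GenContFract.of α).nums n := (hpq n).1.symm
  have hq n : (q n : ℝ) = (GenContFract.of α).dens n := (hpq n).2.symm
  obtain ⟨n₀, hn₀⟩ := h
  refine inZalphaZ_of_eventually_nint_le (p := p) (q := q) ?_ ?_ ?_ ?_ ?_ ?_
  · simpa only [hq] using GenContFract.dens_pos_of_irrational hα
  · simpa only [hq] using
      monotone_nat_of_le_succ fun n => GenContFract.of_den_mono (v := α) (n := n)
  · simpa only [hq] using GenContFract.tendsto_dens_of_irrational hα
  · intro n
    have h := GenContFract.abs_nums_mul_dens_succ_sub_dens_mul_nums_succ hα n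
    rw [← hp, ← hp, ← hq, ← hq] at h
    exact_mod_cast h
  · simpa only [hp, hq] using GenContFract.abs_dens_mul_sub_nums_mul_dens_succ_lt_one hα
  · filter_upwards [eventually_ge_atTop n₀] with n hn
    rw [hq, hp]
    refine (hn₀ n hn).trans (mul_le_mul_of_nonneg_left ?_
      (mul_nonneg (by norm_num) (GenContFract.dens_pos_of_irrational hα n).le))
    rw [(hpq n).1]
    exact nint_le_abs_sub _ _

theorem stmt11 (α : ℝ) (hα : Irrational α) (hα01 : α ∈ Set.Ioo (0:ℝ) 1) (β : ℝ)
    (h : ∃ n₀ : ℕ, ∀ n ≥ n₀,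
      nint (contDen α n * β) ≤ (1/4) * contDen α n * nint (contDen α n * α)) :
    InZalphaZ α β :=
  stmt11_general α hα β h
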